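/- Let p > 0, N ∈ ℕ with N ≥ 1, a < b real, h = (b−a)/N, with knots x_j = a + jh for j = −3,…,N+3. The exponential B-splines φ_{−1}, φ_0, …, φ_{N+1} are linearly independent as functions on [a,b]: if real coefficients δ_{−1}, …, δ_{N+1} satisfy Σ_{i=−1}^{N+1} δ_i φ_i(x) = 0 for all x ∈ [a,b], then δ_i = 0 for all i = −1, …, N+1. -/

import Mathlib

/-- The exponential B-spline `φ_i` with parameter `p`, mesh size `h` and knots
`x_j = x₀ + j·h`, defined piecewise on `[x_{i−2}, x_{i+2}]` and zero elsewhere. -/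
noncomputable def expBspline (p h x₀ : ℝ) (i : ℤ) : ℝ → ℝ := fun x =>
  let s := Real.sinh (p * h)
  let c := Real.cosh (p * h)
  let a₁ := p * h * c / (p * h * c - s)
  let b₁ := p / 2 * ((c * (c - 1) + s ^ 2) / ((p * h * c - s) * (1 - c)))
  let b₂ := p / (2 * (p * h * c - s))
  let c₁ := 1 / 4 * ((Real.exp (-(p * h)) * (1 - c) + s * (Real.exp (-(p * h)) - 1)) /
      ((p * h * c - s) * (1 - c)))
  let d₁ := 1 / 4 * ((Real.exp (p * h) * (c - 1) + s * (Real.exp (p * h) - 1)) /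
      ((p * h * c - s) * (1 - c)))
  let X : ℤ → ℝ := fun j => x₀ + (j : ℝ) * h
  if X (i - 2) ≤ x ∧ x ≤ X (i - 1) then
    b₂ * ((X (i - 2) - x) - Real.sinh (p * (X (i - 2) - x)) / p)
  else if X (i - 1) ≤ x ∧ x ≤ X i then
    a₁ + b₁ * (X i - x) + c₁ * Real.exp (p * (X i - x)) + d₁ * Real.exp (-(p * (X i - x)))
  else if X i ≤ x ∧ x ≤ X (i + 1) then
    a₁ + b₁ * (x - X i) + c₁ * Real.exp (p * (x - X i)) + d₁ * Real.exp (-(p * (x - X i)))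
  else if X (i + 1) ≤ x ∧ x ≤ X (i + 2) then
    b₂ * ((x - X (i + 2)) - Real.sinh (p * (x - X (i + 2))) / p)
  else 0

/-!
On a cell `[x_j, x_{j+1}]` only `φ_{j-1}, …, φ_{j+2}` are nonzero, and each of them is
`b₂ (A + B t + C e^{pt} + D e^{-pt})` in the local variable `t = x - x_j`. The functions
`1, t, e^{pt}, e^{-pt}` are linearly independent on any open interval (differentiate three
times), so a vanishing combination of the four splines gives a `4 × 4` linear system for their
coefficients. Its determinant vanishes only if `e^{ph} = e^{-ph}` or `cosh (ph) = 1`, so all four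
coefficients vanish; the cells `j = 0, …, N - 1` cover all indices `-1, …, N + 1`.
-/

open Real Set

noncomputable def expPoly (p A B C D t : ℝ) : ℝ := A + B * t + C * exp (p * t) + D * exp (-(p * t))

theorem hasDerivAt_expPoly (p A B C D t : ℝ) :
    HasDerivAt (expPoly p A B C D) (expPoly p B 0 (p * C) (-(p * D)) t) t := by
  have := (((hasDerivAt_const t A).add ((hasDerivAt_id t).const_mul B)).add
    ((((hasDerivAt_id t).const_mul p).exp).const_mul C)).add
    ((((hasDerivAt_id t).const_mul p).neg.exp).const_mul D)
  refine this.congr_deriv ?_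
  simp only [expPoly, id, Pi.neg_apply]
  ring

theorem IsOpen.eqOn_zero_of_hasDerivAt {f f' : ℝ → ℝ} {U : Set ℝ} (hU : IsOpen U)
    (hf : ∀ x ∈ U, HasDerivAt f (f' x) x) (h0 : EqOn f 0 U) : EqOn f' 0 U := fun x hx =>
  (hf x hx).unique ((hasDerivAt_const x (0 : ℝ)).congr_of_eventuallyEq
    (h0.eventuallyEq_of_mem (hU.mem_nhds hx)))

theorem expPoly_coeffs_eq_zero {p A B C D l u : ℝ} (hp : p ≠ 0) (hlu : l < u)
    (h0 : EqOn (expPoly p A B C D) 0 (Ioo l u)) : A = 0 ∧ B = 0 ∧ C = 0 ∧ D = 0 := by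
  have hderiv := fun {A B C D : ℝ} (h : EqOn (expPoly p A B C D) 0 (Ioo l u)) =>
    isOpen_Ioo.eqOn_zero_of_hasDerivAt (fun t _ => hasDerivAt_expPoly p A B C D t) h
  have h1 := hderiv h0
  have h2 := hderiv h1
  have h3 := hderiv h2
  have hm : (l + u) / 2 ∈ Ioo l u := ⟨by linarith, by linarith⟩
  have e0 := h0 hm
  have e1 := h1 hm
  have e2 := h2 hm
  have e3 := h3 hm
  simp only [expPoly, Pi.zero_apply] at e0 e1 e2 e3
  set E := exp (p * ((l + u) / 2))
  set F := exp (-(p * ((l + u) / 2)))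
  have hC : C = 0 := by
    have : 2 * p ^ 3 * E * C = 0 := by linear_combination p * e2 + e3
    simpa [hp, E, exp_ne_zero] using this
  have hD : D = 0 := by
    have : 2 * p ^ 3 * F * D = 0 := by linear_combination p * e2 - e3
    simpa [hp, F, exp_ne_zero] using this
  have hB : B = 0 := by simpa [hC, hD] using e1
  exact ⟨by simpa [hB, hC, hD] using e0, hB, hC, hD⟩

theorem Real.sinh_lt_mul_cosh {q : ℝ} (hq : 0 < q) : sinh q < q * cosh q := by
  have hmono : StrictMonoOn (fun x => x * cosh x - sinh x) (Ici 0) := by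
    refine strictMonoOn_of_deriv_pos (convex_Ici 0) (by fun_prop) fun x hx => ?_
    rw [interior_Ici, mem_Ioi] at hx
    have hd : HasDerivAt (fun x => x * cosh x - sinh x) (x * sinh x) x :=
      (((hasDerivAt_id' x).mul (hasDerivAt_cosh x)).sub (hasDerivAt_sinh x)).congr_deriv
        (by ring)
    rw [hd.deriv]
    exact mul_pos hx (sinh_pos_iff.mpr hx)
  simpa using hmono self_mem_Ici hq.le hq

-- The `let`-bound constants of `expBspline`; being definitionally equal to them, they can be
-- named by `change` after unfolding `expBspline`.
namespace expBspline

variable (p h : ℝ)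

noncomputable def a₁ : ℝ := p * h * cosh (p * h) / (p * h * cosh (p * h) - sinh (p * h))

noncomputable def b₁ : ℝ :=
  p / 2 * ((cosh (p * h) * (cosh (p * h) - 1) + sinh (p * h) ^ 2) /
    ((p * h * cosh (p * h) - sinh (p * h)) * (1 - cosh (p * h))))

noncomputable def b₂ : ℝ := p / (2 * (p * h * cosh (p * h) - sinh (p * h)))

noncomputable def c₁ : ℝ :=
  1 / 4 * ((exp (-(p * h)) * (1 - cosh (p * h)) + sinh (p * h) * (exp (-(p * h)) - 1)) /
    ((p * h * cosh (p * h) - sinh (p * h)) * (1 - cosh (p * h))))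

noncomputable def d₁ : ℝ :=
  1 / 4 * ((exp (p * h) * (cosh (p * h) - 1) + sinh (p * h) * (exp (p * h) - 1)) /
    ((p * h * cosh (p * h) - sinh (p * h)) * (1 - cosh (p * h))))

variable {p h}

theorem b₂_pos (hp : 0 < p) (hh : 0 < h) : 0 < b₂ p h := by
  have := sinh_lt_mul_cosh (mul_pos hp hh)
  unfold b₂
  apply div_pos hp
  linarith

theorem a₁_eq : a₁ p h = 2 * h * cosh (p * h) * b₂ p h := by
  rw [a₁, b₂, ← mul_div_mul_left _ _ (two_ne_zero' ℝ), mul_div_assoc']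
  ring

theorem b₁_eq (hp : 0 < p) (hh : 0 < h) : b₁ p h = -(1 + 2 * cosh (p * h)) * b₂ p h := by
  have hK := sinh_lt_mul_cosh (mul_pos hp hh)
  have hc := one_lt_cosh.mpr (mul_pos hp hh).ne'
  simp only [b₁, b₂, sinh_sq]
  field_simp [sub_ne_zero.mpr hc.ne, sub_ne_zero.mpr hK.ne']
  ring

theorem c₁_eq (hp : 0 < p) (hh : 0 < h) :
    c₁ p h = (1 + 2 * exp (-(p * h))) / (2 * p) * b₂ p h := by
  have hK := sinh_lt_mul_cosh (mul_pos hp hh)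
  have hc := one_lt_cosh.mpr (mul_pos hp hh).ne'
  simp only [c₁, b₂, ← cosh_sub_sinh]
  field_simp [sub_ne_zero.mpr hc.ne, sub_ne_zero.mpr hK.ne']
  linear_combination -4 * sinh_sq (p * h)

theorem d₁_eq (hp : 0 < p) (hh : 0 < h) :
    d₁ p h = -(1 + 2 * exp (p * h)) / (2 * p) * b₂ p h := by
  have hK := sinh_lt_mul_cosh (mul_pos hp hh)
  have hc := one_lt_cosh.mpr (mul_pos hp hh).ne'
  simp only [d₁, b₂, ← cosh_add_sinh]
  field_simp [sub_ne_zero.mpr hc.ne, sub_ne_zero.mpr hK.ne']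
  linear_combination 4 * sinh_sq (p * h)

end expBspline

section

open expBspline

variable {p h x₀ t : ℝ}

theorem expBspline_sub_one_apply (j : ℤ) (ht : t ∈ Ioc 0 h) :
    expBspline p h x₀ (j - 1) (x₀ + j * h + t) =
      b₂ p h * expPoly p (-h) 1 (-exp (-(p * h)) / (2 * p)) (exp (p * h) / (2 * p)) t := by
  obtain ⟨ht0, hth⟩ := ht
  simp only [expBspline]
  rw [if_neg (by push_cast; intro hc; linarith [hc.2]),
    if_neg (by push_cast; intro hc; linarith [hc.2]),
    if_neg (by push_cast; intro hc; linarith [hc.2]),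
    if_pos ⟨by push_cast; linarith, by push_cast; linarith⟩,
    show x₀ + j * h + t - (x₀ + ((j - 1 + 2 : ℤ) : ℝ) * h) = t - h by push_cast; ring]
  have e₁ : exp (p * (t - h)) = exp (-(p * h)) * exp (p * t) := by rw [← exp_add]; ring_nf
  have e₂ : exp (-(p * (t - h))) = exp (p * h) * exp (-(p * t)) := by rw [← exp_add]; ring_nf
  rw [sinh_eq (p * (t - h)), e₁, e₂, b₂, expPoly]
  ring

theorem expBspline_apply (hp : 0 < p) (j : ℤ) (ht : t ∈ Ioc 0 h) :
    expBspline p h x₀ j (x₀ + j * h + t) =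
      b₂ p h * expPoly p (2 * h * cosh (p * h)) (-(1 + 2 * cosh (p * h)))
        ((1 + 2 * exp (-(p * h))) / (2 * p)) (-(1 + 2 * exp (p * h)) / (2 * p)) t := by
  obtain ⟨ht0, hth⟩ := ht
  have hh : 0 < h := ht0.trans_le hth
  simp only [expBspline]
  rw [if_neg (by push_cast; intro hc; linarith [hc.2]),
    if_neg (by push_cast; intro hc; linarith [hc.2]),
    if_pos ⟨by linarith, by push_cast; linarith⟩,
    show x₀ + j * h + t - (x₀ + j * h) = t by ring]
  change a₁ p h + b₁ p h * t + c₁ p h * exp (p * t) + d₁ p h * exp (-(p * t)) = _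
  rw [a₁_eq, b₁_eq hp hh, c₁_eq hp hh, d₁_eq hp hh, expPoly]
  ring

theorem expBspline_add_one_apply (hp : 0 < p) (j : ℤ) (ht : t ∈ Ioc 0 h) :
    expBspline p h x₀ (j + 1) (x₀ + j * h + t) =
      b₂ p h * expPoly p (-h) (1 + 2 * cosh (p * h))
        (-(2 + exp (-(p * h))) / (2 * p)) ((exp (p * h) + 2) / (2 * p)) t := by
  obtain ⟨ht0, hth⟩ := ht
  have hh : 0 < h := ht0.trans_le hth
  simp only [expBspline]
  rw [if_neg (by push_cast; intro hc; linarith [hc.2]),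
    if_pos ⟨by push_cast; linarith, by push_cast; linarith⟩,
    show x₀ + ((j + 1 : ℤ) : ℝ) * h - (x₀ + j * h + t) = h - t by push_cast; ring]
  change a₁ p h + b₁ p h * (h - t) + c₁ p h * exp (p * (h - t)) +
    d₁ p h * exp (-(p * (h - t))) = _
  have e₁ : exp (p * (h - t)) = exp (p * h) * exp (-(p * t)) := by rw [← exp_add]; ring_nf
  have e₂ : exp (-(p * (h - t))) = exp (-(p * h)) * exp (p * t) := by rw [← exp_add]; ring_nf
  have hEF : exp (p * h) * exp (-(p * h)) = 1 := by rw [← exp_add, add_neg_cancel, exp_zero]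
  rw [e₁, e₂, a₁_eq, b₁_eq hp hh, c₁_eq hp hh, d₁_eq hp hh, expPoly]
  linear_combination b₂ p h / p * (exp (-(p * t)) - exp (p * t)) * hEF

theorem expBspline_add_two_apply (j : ℤ) (ht : t ∈ Icc 0 h) :
    expBspline p h x₀ (j + 2) (x₀ + j * h + t) =
      b₂ p h * expPoly p 0 (-1) (1 / (2 * p)) (-1 / (2 * p)) t := by
  obtain ⟨ht0, hth⟩ := ht
  simp only [expBspline]
  rw [if_pos ⟨by push_cast; linarith, by push_cast; linarith⟩,
    show x₀ + ((j + 2 - 2 : ℤ) : ℝ) * h - (x₀ + j * h + t) = -t by push_cast; ring,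
    sinh_eq (p * -t), b₂, expPoly]
  ring_nf

theorem expBspline_eq_zero_of_notMem {i : ℤ} {x : ℝ} (hh : 0 ≤ h)
    (hx : x ∉ Icc (x₀ + (i - 2) * h) (x₀ + (i + 2) * h)) : expBspline p h x₀ i x = 0 := by
  have hpiece : ∀ k l : ℤ, i - 2 ≤ k → l ≤ i + 2 → ¬(x₀ + k * h ≤ x ∧ x ≤ x₀ + l * h) := by
    rintro k l hk hl ⟨hkx, hxl⟩
    have hk' : ((i : ℝ) - 2) * h ≤ k * h := mul_le_mul_of_nonneg_right (by exact_mod_cast hk) hh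
    have hl' : (l : ℝ) * h ≤ (i + 2) * h := mul_le_mul_of_nonneg_right (by exact_mod_cast hl) hh
    exact hx ⟨by linarith, by linarith⟩
  simp only [expBspline]
  rw [if_neg (hpiece _ _ le_rfl (by omega)), if_neg (hpiece _ _ (by omega) (by omega)),
    if_neg (hpiece _ _ (by omega) (by omega)), if_neg (hpiece _ _ (by omega) le_rfl)]

theorem sum_mul_expBspline_eq {s : Finset ℤ} (δ : ℤ → ℝ) (j : ℤ)
    (hs : Finset.Icc (j - 1) (j + 2) ⊆ s) (ht : t ∈ Ioo 0 h) :
    ∑ i ∈ s, δ i * expBspline p h x₀ i (x₀ + j * h + t) =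
      δ (j - 1) * expBspline p h x₀ (j - 1) (x₀ + j * h + t) +
      δ j * expBspline p h x₀ j (x₀ + j * h + t) +
      δ (j + 1) * expBspline p h x₀ (j + 1) (x₀ + j * h + t) +
      δ (j + 2) * expBspline p h x₀ (j + 2) (x₀ + j * h + t) := by
  obtain ⟨ht0, hth⟩ := ht
  rw [← Finset.sum_subset hs fun i _ hi => ?_]
  · rw [show Finset.Icc (j - 1) (j + 2) = {j - 1, j, j + 1, j + 2} by ext; simp; omega,
      Finset.sum_insert (by simp; omega), Finset.sum_insert (by simp), Finset.sum_insert (by simp),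
      Finset.sum_singleton]
    ring
  · rw [expBspline_eq_zero_of_notMem (ht0.le.trans hth.le), mul_zero]
    rw [Finset.mem_Icc, not_and_or, not_le, not_le] at hi
    rw [mem_Icc, not_and_or, not_le, not_le]
    rcases hi with hi | hi
    · have : (i : ℝ) + 2 ≤ j := by exact_mod_cast (show i + 2 ≤ j by omega)
      right; nlinarith
    · have : (j : ℝ) + 3 ≤ i := by exact_mod_cast (show j + 3 ≤ i by omega)
      left; nlinarith

theorem eq_zero_of_expBspline_system {E F c u v w z : ℝ} (hEF : E ≠ F) (hc : c ≠ 1)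
    (h₁ : -u + 2 * c * v - w = 0)
    (h₂ : u - (1 + 2 * c) * v + (1 + 2 * c) * w - z = 0)
    (h₃ : -F * u + (1 + 2 * F) * v - (2 + F) * w + z = 0)
    (h₄ : E * u - (1 + 2 * E) * v + (E + 2) * w - z = 0) :
    u = 0 ∧ v = 0 ∧ w = 0 ∧ z = 0 := by
  have huvw : u - 2 * v + w = 0 := by
    refine (mul_eq_zero.mp ?_).resolve_left (sub_ne_zero.mpr hEF)
    linear_combination h₃ + h₄
  have hv : v = 0 := by
    refine (mul_eq_zero.mp ?_).resolve_left (sub_ne_zero.mpr hc)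
    linear_combination (h₁ + huvw) / 2
  have hw : w = 0 := by
    refine (mul_eq_zero.mp ?_).resolve_left (sub_ne_zero.mpr hc)
    linear_combination (E * huvw + h₁ + h₂ - h₄) / 2
  refine ⟨?_, hv, hw, ?_⟩
  · linear_combination huvw + 2 * hv - hw
  · linear_combination -h₁ - h₂ - hv + 2 * c * hw

theorem expBspline_coeffs_eq_zero (hp : 0 < p) (hh : 0 < h) (j : ℤ) {u v w z : ℝ}
    (hsum : ∀ t ∈ Ioo 0 h,
      u * expBspline p h x₀ (j - 1) (x₀ + j * h + t) + v * expBspline p h x₀ j (x₀ + j * h + t) +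
      w * expBspline p h x₀ (j + 1) (x₀ + j * h + t) +
      z * expBspline p h x₀ (j + 2) (x₀ + j * h + t) = 0) :
    u = 0 ∧ v = 0 ∧ w = 0 ∧ z = 0 := by
  set E := exp (p * h)
  set F := exp (-(p * h))
  set c := cosh (p * h)
  have hzero : EqOn (expPoly p (-h * u + 2 * h * c * v - h * w)
      (u - (1 + 2 * c) * v + (1 + 2 * c) * w - z)
      ((-F * u + (1 + 2 * F) * v - (2 + F) * w + z) / (2 * p))
      ((E * u - (1 + 2 * E) * v + (E + 2) * w - z) / (2 * p))) 0 (Ioo 0 h) := fun t ht => by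
    refine (mul_eq_zero.mp ?_).resolve_left (b₂_pos hp hh).ne'
    rw [← hsum t ht, expBspline_sub_one_apply j (Ioo_subset_Ioc_self ht),
      expBspline_apply hp j (Ioo_subset_Ioc_self ht),
      expBspline_add_one_apply hp j (Ioo_subset_Ioc_self ht),
      expBspline_add_two_apply j (Ioo_subset_Icc_self ht)]
    simp only [expPoly]
    ring
  obtain ⟨hA, hB, hC, hD⟩ := expPoly_coeffs_eq_zero hp.ne' hh hzero
  have h2p : 2 * p ≠ 0 := by positivity
  refine eq_zero_of_expBspline_system (E := E) (F := F) (c := c)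
    (exp_lt_exp.mpr (by nlinarith)).ne' (one_lt_cosh.mpr (mul_pos hp hh).ne').ne' ?_ hB
    ((div_eq_zero_iff.mp hC).resolve_right h2p) ((div_eq_zero_iff.mp hD).resolve_right h2p)
  refine (mul_eq_zero.mp ?_).resolve_left hh.ne'
  linear_combination hA

end

/-- The exponential B-splines `φ_{−1}, φ_0, …, φ_{N+1}` with knots `x_j = a + jh`,
`h = (b−a)/N`, are linearly independent as functions on `[a,b]`. -/
theorem expBspline_linearIndependent (p : ℝ) (hp : 0 < p) (N : ℕ) (hN : 1 ≤ N)
    (a b : ℝ) (hab : a < b) (h : ℝ) (hh : h = (b - a) / N) (δ : ℤ → ℝ)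
    (hzero : ∀ x ∈ Set.Icc a b,
      (∑ i ∈ Finset.Icc (-1 : ℤ) ((N : ℤ) + 1), δ i * expBspline p h a i x) = 0) :
    ∀ i ∈ Finset.Icc (-1 : ℤ) ((N : ℤ) + 1), δ i = 0 := by
  have hN' : (0 : ℝ) < N := Nat.cast_pos.mpr hN
  have hh₀ : 0 < h := hh ▸ div_pos (sub_pos.mpr hab) hN'
  have hb : b = a + N * h := by rw [hh]; field_simp; ring
  have hcell : ∀ j : ℤ, 0 ≤ j → j + 1 ≤ N →
      δ (j - 1) = 0 ∧ δ j = 0 ∧ δ (j + 1) = 0 ∧ δ (j + 2) = 0 := by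
    intro j hj hjN
    refine expBspline_coeffs_eq_zero (x₀ := a) hp hh₀ j fun t ht => ?_
    have hj' : (0 : ℝ) ≤ j := by exact_mod_cast hj
    have hjN' : (j : ℝ) + 1 ≤ N := by exact_mod_cast hjN
    have hx : a + j * h + t ∈ Icc a b := ⟨by nlinarith [mul_nonneg hj' hh₀.le, ht.1],
      by nlinarith [mul_le_mul_of_nonneg_right hjN' hh₀.le, ht.2]⟩
    rw [← hzero _ hx, sum_mul_expBspline_eq δ j (Finset.Icc_subset_Icc (by omega) (by omega)) ht]
  intro i hi
  obtain ⟨hi₁, hi₂⟩ := Finset.mem_Icc.mp hi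
  rcases le_or_gt i 2 with hi₃ | hi₃
  · obtain ⟨h₁, h₂, h₃, h₄⟩ := hcell 0 le_rfl (by omega)
    interval_cases i <;> assumption
  · simpa using (hcell (i - 2) (by omega) (by omega)).2.2.2
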